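/- arXiv:2112.01311 — 3 statements merged into one kernel-verified Lean document; each statement's English description precedes it below -/
import Mathlib

section
/- If X is a tree (finite acyclic simple graph, viewed as a 1-dimensional simplicial complex) with at least one critical 1-simplex, and f is a discrete Morse function on X, then the restriction of f to the set of critical simplices attains its maximum on a critical 1-simplex. -/
/-- The data of a function on the simplices (vertices and edges) of a graph. -/
structure PreDMF (V : Type*) where
  f₀ : V → ℝ
  f₁ : Sym2 V → ℝ

/-- A discrete Morse function on a graph: weakly increasing on faces, at most 2-to-1,
and equal values only occur on vertex/incident-edge pairs. -/
def IsDMF {V : Type*} (G : SimpleGraph V) (F : PreDMF V) : Prop :=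
  (∀ e ∈ G.edgeSet, ∀ v ∈ e, F.f₀ v ≤ F.f₁ e) ∧
  (∀ u v : V, F.f₀ u = F.f₀ v → u = v) ∧
  (∀ e ∈ G.edgeSet, ∀ e' ∈ G.edgeSet, F.f₁ e = F.f₁ e' → e = e') ∧
  (∀ v : V, ∀ e ∈ G.edgeSet, F.f₀ v = F.f₁ e → v ∈ e)

/-- A critical 0-simplex (vertex): no edge shares its value. -/
def CritV {V : Type*} (G : SimpleGraph V) (F : PreDMF V) (v : V) : Prop :=
  ∀ e ∈ G.edgeSet, F.f₁ e ≠ F.f₀ v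

/-- A critical 1-simplex (edge): no vertex shares its value. -/
def CritE {V : Type*} (G : SimpleGraph V) (F : PreDMF V) (e : Sym2 V) : Prop :=
  e ∈ G.edgeSet ∧ ∀ v : V, F.f₀ v ≠ F.f₁ e

/-- The sublevel complex of level `c` (edges of value `≤ c`). -/
def lsub {V : Type*} (G : SimpleGraph V) (F : PreDMF V) (c : ℝ) : SimpleGraph V where
  Adj u w := G.Adj u w ∧ F.f₁ s(u, w) ≤ c
  symm := by
    constructor
    intro u w h
    exact ⟨h.1.symm, by rw [Sym2.eq_swap]; exact h.2⟩
  loopless := by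
    constructor
    intro u h
    exact G.irrefl h.1

/-- The strict sublevel complex `X_{c-ε}` (edges of value `< c`). -/
def ssub {V : Type*} (G : SimpleGraph V) (F : PreDMF V) (c : ℝ) : SimpleGraph V where
  Adj u w := G.Adj u w ∧ F.f₁ s(u, w) < c
  symm := by
    constructor
    intro u w h
    exact ⟨h.1.symm, by rw [Sym2.eq_swap]; exact h.2⟩
  loopless := by
    constructor
    intro u h
    exact G.irrefl h.1

/-!
Let `e` be a critical edge of maximal value and suppose a critical vertex `v` had
`f v > f e`. Walking back from `v` along a path, every edge `s(w, u)` has value at least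
`f v`, hence is not critical, hence is paired with one of its endpoints; the pairing
cannot be with `u`, whose value is taken by the edge behind it on the path (or which is
`v`, a critical vertex), so it is with `w`, and `f w ≥ f v`. As the tree is connected,
this applies to an endpoint of `e`, whose value is at most `f e < f v`.
-/

open SimpleGraph

namespace IsDMF

variable {V : Type*} {G : SimpleGraph V} {F : PreDMF V}

lemma exists_mem_eq_of_not_critE (hF : IsDMF G F) {e : Sym2 V} (he : e ∈ G.edgeSet)
    (hne : ¬CritE G F e) : ∃ x ∈ e, F.f₀ x = F.f₁ e := by
  obtain ⟨x, hx⟩ : ∃ x, F.f₀ x = F.f₁ e := by simpa [CritE, he] using hne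
  exact ⟨x, hF.2.2.2 x e he hx, hx⟩

lemma f₀_le_of_isPath (hF : IsDMF G F) {v : V} (hv : CritV G F v)
    (hm : ∀ e, CritE G F e → F.f₁ e < F.f₀ v) {w : V} (p : G.Walk w v) (hp : p.IsPath) :
    F.f₀ v ≤ F.f₀ w ∧ ∀ e ∈ G.edgeSet, F.f₁ e = F.f₀ w → e ∈ p.edges := by
  induction p with
  | nil => exact ⟨le_rfl, fun e he hev => absurd hev (hv e he)⟩
  | @cons w u v hwu q ih =>
    obtain ⟨hq, hwq⟩ := (Walk.cons_isPath_iff hwu q).mp hp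
    obtain ⟨hvu, hu⟩ := ih hv hm hq
    have hedge : s(w, u) ∈ G.edgeSet := hwu
    have hu_le : F.f₀ u ≤ F.f₁ s(w, u) := hF.1 _ hedge u (Sym2.mem_mk_right w u)
    have hu_ne : F.f₀ u ≠ F.f₁ s(w, u) := fun h =>
      hwq (q.fst_mem_support_of_mem_edges (hu _ hedge h.symm))
    have hnc : ¬CritE G F s(w, u) := fun hc => by linarith [hm _ hc]
    obtain ⟨x, hx, hxe⟩ := hF.exists_mem_eq_of_not_critE hedge hnc
    have hw : F.f₀ w = F.f₁ s(w, u) := by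
      rcases Sym2.mem_iff.mp hx with rfl | rfl
      · exact hxe
      · exact absurd hxe hu_ne
    refine ⟨by linarith, fun e he hew => ?_⟩
    rw [hF.2.2.1 e he _ hedge (hew.trans hw)]
    exact List.mem_cons_self

end IsDMF

/-- If a tree has at least one critical 1-simplex, then the restriction of a discrete
Morse function to the critical simplices attains its maximum on a critical 1-simplex. -/
theorem stmt1 {V : Type*} [Fintype V] (G : SimpleGraph V) (hG : G.IsTree)
    (F : PreDMF V) (hF : IsDMF G F) (h : ∃ e, CritE G F e) :
    ∃ e, CritE G F e ∧ (∀ v : V, CritV G F v → F.f₀ v ≤ F.f₁ e) ∧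
      ∀ e' : Sym2 V, CritE G F e' → F.f₁ e' ≤ F.f₁ e := by
  obtain ⟨e, he, hmax⟩ := Set.exists_max_image {e | CritE G F e} F.f₁ (Set.toFinite _) h
  refine ⟨e, he, fun v hv => ?_, hmax⟩
  by_contra! hlt
  induction e using Sym2.ind with
  | _ a b =>
    obtain ⟨p, hp⟩ := hG.connected.preconnected.exists_isPath a v
    have hva := (hF.f₀_le_of_isPath hv (fun e' he' => (hmax e' he').trans_lt hlt) p hp).1
    linarith [hF.1 _ he.1 a (Sym2.mem_mk_left a b)]
end

section
/- If two discrete Morse functions f and g on the same tree X are shuffle-equivalent, then their induced merge trees M(X,f) and M(X,g) are isomorphic as merge trees. -/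
/-- Chirality: left or right. -/
inductive Chir : Type
  | L : Chir
  | R : Chir
  deriving DecidableEq

/-- The opposite chirality. -/
def Chir.other : Chir → Chir
  | .L => .R
  | .R => .L

/-- A merge tree: a full rooted chiral binary tree, encoded by the set of its nodes,
each node being the list of chiralities along the shortest path from the root to it
(the root is the empty list). -/
structure MergeTree : Type where
  nodes : Finset (List Chir)
  root_mem : [] ∈ nodes
  prefix_closed : ∀ (w : List Chir) (x : Chir), w ++ [x] ∈ nodes → w ∈ nodes
  full : ∀ w : List Chir, w ++ [Chir.L] ∈ nodes ↔ w ++ [Chir.R] ∈ nodes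

/-- An inner node: a node with (two) children. -/
def MergeTree.IsInner (T : MergeTree) (n : List Chir) : Prop :=
  n ∈ T.nodes ∧ n ++ [Chir.L] ∈ T.nodes

/-- A leaf node: a node without children. -/
def MergeTree.IsLeaf (T : MergeTree) (n : List Chir) : Prop :=
  n ∈ T.nodes ∧ n ++ [Chir.L] ∉ T.nodes

/-- The chirality of a node (the root has chirality `L` by convention). -/
def chir (n : List Chir) : Chir := n.getLast?.getD Chir.L

/-- The number of inner nodes of a merge tree. -/
def MergeTree.innerCount (T : MergeTree) : ℕ :=
  (T.nodes.filter fun n => n ++ [Chir.L] ∈ T.nodes).card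

/-- Auxiliary comparison of path words; the first argument is the letter at the last
position where the two words agreed (cf. "a_k = b_k"): under a common `L`, the letter
`L` precedes `R`; under a common `R`, `R` precedes `L`; shorter words are larger. -/
def leAux : Chir → List Chir → List Chir → Prop
  | _, _, [] => True
  | _, [], _ :: _ => False
  | last, x :: a, y :: b => if x = y then leAux x a b else x = last

/-- The sublevel-connected Morse order (comparison of path words; every path word
starts with the letter `L` for the root). -/
def scLe (a b : List Chir) : Prop := leAux Chir.L a b

/-- The index Morse order: leaves below inner nodes; among leaves and among inner
nodes, compare path words. -/
def ioLe (T : MergeTree) (a b : List Chir) : Prop :=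
  (T.IsLeaf a ∧ T.IsInner b) ∨
    (((T.IsLeaf a ∧ T.IsLeaf b) ∨ (T.IsInner a ∧ T.IsInner b)) ∧ scLe a b)

/-- The simplex order on the nodes of a merge tree. -/
def simpLe (a b : List Chir) : Prop :=
  a = b ∨ (b ++ [Chir.L]) <+: a ∨ (a ++ [Chir.R]) <+: b ∨
    ∃ p : List Chir, (p ++ [Chir.L]) <+: a ∧ (p ++ [Chir.R]) <+: b

/-- A vertex `z` belongs to the connected component of `u` in the strict sublevel
complex `X_{c-ε}`. -/
def inCompV {V : Type*} (G : SimpleGraph V) (F : PreDMF V) (c : ℝ) (u z : V) : Prop :=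
  F.f₀ z < c ∧ (ssub G F c).Reachable z u

/-- An edge `e` belongs to the connected component of `u` in the strict sublevel
complex `X_{c-ε}`. -/
def inCompE {V : Type*} (G : SimpleGraph V) (F : PreDMF V) (c : ℝ) (u : V)
    (e : Sym2 V) : Prop :=
  e ∈ G.edgeSet ∧ F.f₁ e < c ∧ ∀ z ∈ e, (ssub G F c).Reachable z u

/-- `m` is the maximal critical value attained on the connected component of `u` in
the strict sublevel complex `X_{c-ε}`. -/
def IsMaxCrit {V : Type*} (G : SimpleGraph V) (F : PreDMF V) (c : ℝ) (u : V)
    (m : ℝ) : Prop :=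
  ((∃ z : V, inCompV G F c u z ∧ CritV G F z ∧ F.f₀ z = m) ∨
    (∃ e : Sym2 V, inCompE G F c u e ∧ CritE G F e ∧ F.f₁ e = m)) ∧
  (∀ z : V, inCompV G F c u z → CritV G F z → F.f₀ z ≤ m) ∧
  (∀ e : Sym2 V, inCompE G F c u e → CritE G F e → F.f₁ e ≤ m)

/-- `m` is the minimal value attained on the connected component of `u` in the strict
sublevel complex `X_{c-ε}`. -/
def IsCompMin {V : Type*} (G : SimpleGraph V) (F : PreDMF V) (c : ℝ) (u : V)
    (m : ℝ) : Prop :=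
  (∃ z : V, inCompV G F c u z ∧ F.f₀ z = m) ∧
  (∀ z : V, inCompV G F c u z → m ≤ F.f₀ z)

/-- `(T, μ)` is the Morse labeled merge tree `M(X, f)` induced by the dMf `F` on the
tree `G`: nodes correspond bijectively (via the labels `μ`) to critical simplices,
inner nodes to critical edges and leaves to critical vertices; the root corresponds to
the maximal critical edge; and the two children of an inner node carry the maximal
critical values of the two connected components of the strict sublevel complex
containing the endpoints of the corresponding critical edge, the component containing
the smaller minimum inheriting the chirality of the parent. -/
def IsInducedMlTree {V : Type*} (G : SimpleGraph V) (F : PreDMF V)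
    (T : MergeTree) (μ : List Chir → ℝ) : Prop :=
  (∀ n ∈ T.nodes, ∀ n' ∈ T.nodes, μ n = μ n' → n = n') ∧
  (∀ e : Sym2 V, CritE G F e → ∃ n : List Chir, T.IsInner n ∧ μ n = F.f₁ e) ∧
  (∀ v : V, CritV G F v → ∃ n : List Chir, T.IsLeaf n ∧ μ n = F.f₀ v) ∧
  ((∃ e : Sym2 V, CritE G F e) →
    T.IsInner [] ∧ ∀ e : Sym2 V, CritE G F e → F.f₁ e ≤ μ []) ∧
  ((¬ ∃ e : Sym2 V, CritE G F e) → T.nodes = {([] : List Chir)}) ∧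
  (∀ n : List Chir, T.IsLeaf n → ∃ v : V, CritV G F v ∧ F.f₀ v = μ n) ∧
  (∀ n : List Chir, T.IsInner n → ∃ e : Sym2 V, CritE G F e ∧ F.f₁ e = μ n ∧
    ∃ u w : V, s(u, w) = e ∧
      ∃ mu mw minu minw : ℝ,
        IsMaxCrit G F (F.f₁ e) u mu ∧ IsMaxCrit G F (F.f₁ e) w mw ∧
        IsCompMin G F (F.f₁ e) u minu ∧ IsCompMin G F (F.f₁ e) w minw ∧
        ((minu < minw ∧ μ (n ++ [chir n]) = mu ∧ μ (n ++ [(chir n).other]) = mw) ∨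
         (minw < minu ∧ μ (n ++ [chir n]) = mw ∧ μ (n ++ [(chir n).other]) = mu)))

/-- Shuffle equivalence of dMfs on the same tree: same critical simplices, same order
on critical 0-simplices and same order on critical 1-simplices. -/
def ShuffleEquiv {V : Type*} (G : SimpleGraph V) (F F' : PreDMF V) : Prop :=
  (∀ v : V, CritV G F v ↔ CritV G F' v) ∧
  (∀ e : Sym2 V, CritE G F e ↔ CritE G F' e) ∧
  (∀ u v : V, CritV G F u → CritV G F v → (F.f₀ u ≤ F.f₀ v ↔ F'.f₀ u ≤ F'.f₀ v)) ∧
  (∀ e e' : Sym2 V, CritE G F e → CritE G F e' →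
    (F.f₁ e ≤ F.f₁ e' ↔ F'.f₁ e ≤ F'.f₁ e'))


/-!
For a critical edge `e` of value `c` and an endpoint `u` of `e`, a vertex `z` lies in the
component of `u` in the strict sublevel complex `X_{c-ε}` iff every critical edge on the tree
path from `z` to `u` has value `< c`: a maximal edge of such a path cannot be regular, as the
vertex it is paired with would be interior to the path, and the other path edge at that vertex
would have a larger value. This criterion only sees critical simplices and the order of the
critical edges, so for shuffle-equivalent `f` and `g` these components contain the same
critical simplices. Their minima are attained at critical vertices, and their maximal critical
values at critical edges whenever they contain one, so both are attained at the same simplices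
for `f` and for `g`. By induction from the root, every node of `M(X,f)` and of `M(X,g)` is
labelled by one and the same critical simplex, and the two trees have the same nodes.
-/

open SimpleGraph

theorem SimpleGraph.Walk.IsTrail.exists_mem_edges_ne {V : Type*} {G : SimpleGraph V}
    {a b v : V} {p : G.Walk a b} (hp : p.IsTrail) (hv : v ∈ p.support) (ha : v ≠ a)
    (hb : v ≠ b) (ε : Sym2 V) : ∃ ε' ∈ p.edges, ε' ≠ ε ∧ v ∈ ε' := by
  classical
  have h₁ : s(v, (p.takeUntil v hv).reverse.snd) ∈ (p.takeUntil v hv).edges := by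
    simpa using (p.takeUntil v hv).reverse.mk_start_snd_mem_edges (Walk.not_nil_of_ne ha)
  have h₂ : s(v, (p.dropUntil v hv).snd) ∈ (p.dropUntil v hv).edges :=
    (p.dropUntil v hv).mk_start_snd_mem_edges (Walk.not_nil_of_ne hb)
  have hne : s(v, (p.takeUntil v hv).reverse.snd) ≠ s(v, (p.dropUntil v hv).snd) :=
    fun h => hp.disjoint_edges_takeUntil_dropUntil hv h₁ (h ▸ h₂)
  by_cases h : s(v, (p.takeUntil v hv).reverse.snd) = ε
  · exact ⟨_, p.edges_dropUntil_subset_edges hv h₂, h ▸ hne.symm, Sym2.mem_mk_left _ _⟩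
  · exact ⟨_, p.edges_takeUntil_subset_edges hv h₁, h, Sym2.mem_mk_left _ _⟩

theorem Set.InjOn.eq_of_isMaxOn_of_le_iff {α β γ : Type*} [PartialOrder β] [Preorder γ]
    {f : α → β} {g : α → γ} {s : Set α} {a b : α} (hf : s.InjOn f)
    (hfg : ∀ x ∈ s, ∀ y ∈ s, f x ≤ f y ↔ g x ≤ g y) (ha : a ∈ s) (hb : b ∈ s)
    (hfa : ∀ x ∈ s, f x ≤ f a) (hgb : ∀ x ∈ s, g x ≤ g b) : a = b :=
  hf ha hb (le_antisymm ((hfg a ha b hb).2 (hgb a ha)) (hfa b hb))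

theorem Set.InjOn.eq_of_isMinOn_of_le_iff {α β γ : Type*} [PartialOrder β] [Preorder γ]
    {f : α → β} {g : α → γ} {s : Set α} {a b : α} (hf : s.InjOn f)
    (hfg : ∀ x ∈ s, ∀ y ∈ s, f x ≤ f y ↔ g x ≤ g y) (ha : a ∈ s) (hb : b ∈ s)
    (hfa : ∀ x ∈ s, f a ≤ f x) (hgb : ∀ x ∈ s, g b ≤ g x) : a = b :=
  hf ha hb (le_antisymm (hfa b hb) ((hfg b hb a ha).2 (hgb a ha)))

section SublevelComponents

variable {V : Type*} {G : SimpleGraph V} {F F' : PreDMF V} {c : ℝ}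

theorem mem_edgeSet_ssub {e : Sym2 V} :
    e ∈ (ssub G F c).edgeSet ↔ e ∈ G.edgeSet ∧ F.f₁ e < c := by
  induction e using Sym2.ind with
  | _ a b => exact Iff.rfl

theorem ssub_le (c : ℝ) : ssub G F c ≤ G := fun _ _ h => h.1

theorem inCompE_of_mem_edges {z b u : V} {ε : Sym2 V} (W : (ssub G F c).Walk z b)
    (hε : ε ∈ W.edges) (hz : (ssub G F c).Reachable z u) : inCompE G F c u ε := by
  classical
  obtain ⟨hεG, hεc⟩ := mem_edgeSet_ssub.1 (W.edges_subset_edgeSet hε)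
  exact ⟨hεG, hεc, fun x hx =>
    (W.takeUntil x (W.mem_support_of_mem_edges hε hx)).reachable.symm.trans hz⟩

theorem IsDMF.f₀_lt_f₁ (hF : IsDMF G F) {e : Sym2 V} (he : CritE G F e) {v : V}
    (hv : v ∈ e) : F.f₀ v < F.f₁ e :=
  (hF.1 e he.1 v hv).lt_of_ne (he.2 v)

theorem IsDMF.f₀_lt_of_reachable_ssub (hF : IsDMF G F) {z u : V}
    (h : (ssub G F c).Reachable z u) (hu : F.f₀ u < c) : F.f₀ z < c := by
  obtain ⟨p⟩ := h
  cases p with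
  | nil => exact hu
  | cons hadj _ => exact (hF.1 _ hadj.1 z (Sym2.mem_mk_left _ _)).trans_lt hadj.2

theorem IsDMF.inCompV_iff (hF : IsDMF G F) {u z : V} (hu : F.f₀ u < c) :
    inCompV G F c u z ↔ (ssub G F c).Reachable z u :=
  ⟨And.right, fun h => ⟨hF.f₀_lt_of_reachable_ssub h hu, h⟩⟩

theorem IsDMF.critE_of_forall_mem_edges_le (hF : IsDMF G F) {a b : V} {p : G.Walk a b}
    (hp : p.IsPath) {ε : Sym2 V} (hε : ε ∈ p.edges)
    (hmax : ∀ ε' ∈ p.edges, F.f₁ ε' ≤ F.f₁ ε) (ha : F.f₀ a ≠ F.f₁ ε)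
    (hb : F.f₀ b ≠ F.f₁ ε) : CritE G F ε := by
  have hεG := p.edges_subset_edgeSet hε
  refine ⟨hεG, fun v hv => ?_⟩
  have hvε : v ∈ ε := hF.2.2.2 v ε hεG hv
  obtain ⟨ε', hε', hne, hvε'⟩ :=
    hp.isTrail.exists_mem_edges_ne (p.mem_support_of_mem_edges hε hvε)
    (by rintro rfl; exact ha hv) (by rintro rfl; exact hb hv) ε
  have hε'G := p.edges_subset_edgeSet hε'
  have hlt : F.f₀ v < F.f₁ ε' := (hF.1 ε' hε'G v hvε').lt_of_ne fun h =>
    hne (hF.2.2.1 ε' hε'G ε hεG (h.symm.trans hv))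
  exact (hlt.trans_le (hmax ε' hε')).ne hv

theorem IsDMF.f₁_lt_of_forall_critE_lt (hF : IsDMF G F) {z u : V} {p : G.Walk z u}
    (hp : p.IsPath) (hz : CritV G F z ∨ F.f₀ z < c) (hu : CritV G F u ∨ F.f₀ u < c)
    (hcrit : ∀ ε ∈ p.edges, CritE G F ε → F.f₁ ε < c) {ε : Sym2 V}
    (hε : ε ∈ p.edges) :
    F.f₁ ε < c := by
  classical
  obtain ⟨εM, hεM, hmax⟩ :=
    p.edges.toFinset.exists_max_image F.f₁ ⟨ε, by simpa using hε⟩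
  simp only [List.mem_toFinset] at hεM hmax
  refine (hmax ε hε).trans_lt (not_le.1 fun hc => ?_)
  have hend : ∀ x, CritV G F x ∨ F.f₀ x < c → F.f₀ x ≠ F.f₁ εM := by
    rintro x (hx | hx)
    · exact (hx εM (p.edges_subset_edgeSet hεM)).symm
    · exact (hx.trans_le hc).ne
  exact not_le.2 (hcrit εM hεM
    (hF.critE_of_forall_mem_edges_le hp hεM hmax (hend z hz) (hend u hu))) hc

theorem SimpleGraph.IsTree.reachable_ssub_iff (hG : G.IsTree) (hF : IsDMF G F) {z u : V}
    (hz : CritV G F z ∨ F.f₀ z < c) (hu : CritV G F u ∨ F.f₀ u < c) :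
    (ssub G F c).Reachable z u ↔
      ∀ p : G.Walk z u, p.IsPath → ∀ ε ∈ p.edges, CritE G F ε → F.f₁ ε < c := by
  classical
  constructor
  · rintro ⟨q⟩ p hp ε hε -
    obtain rfl := (hG.existsUnique_path z u).unique hp (q.bypass_isPath.mapLe (ssub_le c))
    rw [Walk.edges_mapLe_eq_edges] at hε
    exact (mem_edgeSet_ssub.1 (q.bypass.edges_subset_edgeSet hε)).2
  · intro h
    obtain ⟨p, hp⟩ := (hG.existsUnique_path z u).exists
    exact ⟨p.transfer _ fun ε hε => mem_edgeSet_ssub.2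
      ⟨p.edges_subset_edgeSet hε, hF.f₁_lt_of_forall_critE_lt hp hz hu (h p hp) hε⟩⟩

theorem IsDMF.exists_critE_f₀_lt (hF : IsDMF G F) {u z : V} {ε₀ : Sym2 V}
    (hz : CritV G F z) (hzc : inCompV G F c u z) (hε₀ : CritE G F ε₀)
    (hε₀c : inCompE G F c u ε₀) :
    ∃ ε, CritE G F ε ∧ inCompE G F c u ε ∧ F.f₀ z < F.f₁ ε := by
  classical
  obtain ⟨a, b⟩ := ε₀
  have hab : (ssub G F c).Adj a b := ⟨hε₀c.1, hε₀c.2.1⟩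
  let q := (hzc.2.trans (hε₀c.2.2 a (Sym2.mem_mk_left _ _)).symm).some.bypass
  have hq : q.IsPath := Walk.bypass_isPath _
  let W := q.concat hab
  have hW : W.edges = q.edges ++ [s(a, b)] := by simp [W, Walk.edges_concat]
  -- `W` runs from `z` through `ε₀`; its largest edge is critical and lies above `f z`
  obtain ⟨εM, hεM, hmax⟩ :=
    W.edges.toFinset.exists_max_image F.f₁ ⟨s(a, b), by simp [hW]⟩
  simp only [List.mem_toFinset] at hεM hmax
  have hzM : F.f₀ z < F.f₁ εM := by
    have hfirst := W.mk_start_snd_mem_edges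
      (Walk.not_nil_iff_lt_length.2 (by simp [W, Walk.length_concat]))
    have hfirstG := (mem_edgeSet_ssub.1 (W.edges_subset_edgeSet hfirst)).1
    exact ((hF.1 _ hfirstG z (Sym2.mem_mk_left _ _)).lt_of_ne (hz _ hfirstG).symm).trans_le
      (hmax _ hfirst)
  have haM : F.f₀ a < F.f₁ εM :=
    (hF.f₀_lt_f₁ hε₀ (Sym2.mem_mk_left _ _)).trans_le (hmax _ (by simp [hW]))
  refine ⟨εM, ?_, inCompE_of_mem_edges W hεM hzc.2, hzM⟩
  rcases List.mem_append.1 (hW ▸ hεM) with hεq | hεab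
  · refine hF.critE_of_forall_mem_edges_le (hq.mapLe (ssub_le c))
      (by rwa [Walk.edges_mapLe_eq_edges]) (fun ε' hε' => hmax ε' ?_) hzM.ne haM.ne
    rw [Walk.edges_mapLe_eq_edges] at hε'
    simp [hW, hε']
  · rw [List.mem_singleton.1 hεab]
    exact hε₀

theorem IsMaxCrit.exists_critE (hF : IsDMF G F) {u : V} {m : ℝ} (h : IsMaxCrit G F c u m)
    (hex : ∃ ε, CritE G F ε ∧ inCompE G F c u ε) :
    ∃ ε, CritE G F ε ∧ inCompE G F c u ε ∧ F.f₁ ε = m := by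
  obtain ⟨ε₀, hε₀, hε₀c⟩ := hex
  rcases h.1 with ⟨z, hzc, hz, rfl⟩ | ⟨ε, hεc, hε, hεm⟩
  · obtain ⟨ε, hε, hεc, hlt⟩ := hF.exists_critE_f₀_lt hz hzc hε₀ hε₀c
    exact absurd (h.2.2 ε hεc hε) (not_le.2 hlt)
  · exact ⟨ε, hε, hεc, hεm⟩

theorem IsCompMin.exists_critV (hF : IsDMF G F) {u : V} {m : ℝ} (h : IsCompMin G F c u m) :
    ∃ z, CritV G F z ∧ inCompV G F c u z ∧ F.f₀ z = m := by
  obtain ⟨⟨z, hzc, rfl⟩, hmin⟩ := h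
  refine ⟨z, fun ε hε hεz => ?_, hzc, rfl⟩
  obtain ⟨y, rfl⟩ := Sym2.mem_iff_exists.1 (hF.2.2.2 z _ hε hεz.symm)
  have hy : F.f₀ y < F.f₀ z := (hεz ▸ hF.1 _ hε y (Sym2.mem_mk_right _ _)).lt_of_ne
    fun h => hε.ne (hF.2.1 _ _ h).symm
  have hadj : (ssub G F c).Adj y z := ⟨hε.symm, by rw [Sym2.eq_swap, hεz]; exact hzc.1⟩
  exact not_le.2 hy (hmin y ⟨hy.trans hzc.1, hadj.reachable.trans hzc.2⟩)

end SublevelComponents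

def CritValPair {V : Type*} (G : SimpleGraph V) (F F' : PreDMF V) (r r' : ℝ) : Prop :=
  (∃ ε, CritE G F ε ∧ F.f₁ ε = r ∧ F'.f₁ ε = r') ∨
  (∃ z, CritV G F z ∧ F.f₀ z = r ∧ F'.f₀ z = r')

namespace ShuffleEquiv

variable {V : Type*} {G : SimpleGraph V} {F F' : PreDMF V}

theorem f₀_lt_iff (hsh : ShuffleEquiv G F F') {z v : V} (hz : CritV G F z) (hv : CritV G F v) :
    F.f₀ z < F.f₀ v ↔ F'.f₀ z < F'.f₀ v := by
  simpa only [not_le] using (hsh.2.2.1 v z hv hz).not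

theorem f₁_lt_iff (hsh : ShuffleEquiv G F F') {ε e : Sym2 V} (hε : CritE G F ε)
    (he : CritE G F e) : F.f₁ ε < F.f₁ e ↔ F'.f₁ ε < F'.f₁ e := by
  simpa only [not_le] using (hsh.2.2.2 e ε he hε).not

theorem reachable_ssub_iff (hsh : ShuffleEquiv G F F') (hG : G.IsTree) (hF : IsDMF G F)
    (hF' : IsDMF G F') {e : Sym2 V} (he : CritE G F e) {z u : V}
    (hz : CritV G F z ∨ F.f₀ z < F.f₁ e) (hz' : CritV G F' z ∨ F'.f₀ z < F'.f₁ e)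
    (hu : F.f₀ u < F.f₁ e) (hu' : F'.f₀ u < F'.f₁ e) :
    (ssub G F (F.f₁ e)).Reachable z u ↔ (ssub G F' (F'.f₁ e)).Reachable z u := by
  rw [hG.reachable_ssub_iff hF hz (.inr hu), hG.reachable_ssub_iff hF' hz' (.inr hu')]
  refine forall₄_congr fun p hp ε hε => ?_
  rw [← hsh.2.1 ε]
  exact imp_congr_right fun hε => hsh.f₁_lt_iff hε he

theorem inCompV_iff (hsh : ShuffleEquiv G F F') (hG : G.IsTree) (hF : IsDMF G F)
    (hF' : IsDMF G F') {e : Sym2 V} (he : CritE G F e) {u z : V} (hu : u ∈ e)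
    (hz : CritV G F z) : inCompV G F (F.f₁ e) u z ↔ inCompV G F' (F'.f₁ e) u z := by
  have hu₁ := hF.f₀_lt_f₁ he hu
  have hu₁' := hF'.f₀_lt_f₁ ((hsh.2.1 e).1 he) hu
  rw [hF.inCompV_iff hu₁, hF'.inCompV_iff hu₁']
  exact hsh.reachable_ssub_iff hG hF hF' he (.inl hz) (.inl ((hsh.1 z).1 hz)) hu₁ hu₁'

theorem inCompE_iff (hsh : ShuffleEquiv G F F') (hG : G.IsTree) (hF : IsDMF G F)
    (hF' : IsDMF G F') {e : Sym2 V} (he : CritE G F e) {u : V} (hu : u ∈ e) {ε : Sym2 V}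
    (hε : CritE G F ε) : inCompE G F (F.f₁ e) u ε ↔ inCompE G F' (F'.f₁ e) u ε := by
  have hε' := (hsh.2.1 ε).1 hε
  have hreach : F'.f₁ ε < F'.f₁ e → ∀ z ∈ ε,
      ((ssub G F (F.f₁ e)).Reachable z u ↔ (ssub G F' (F'.f₁ e)).Reachable z u) :=
    fun h' z hz => hsh.reachable_ssub_iff hG hF hF' he
      (.inr ((hF.f₀_lt_f₁ hε hz).trans ((hsh.f₁_lt_iff hε he).2 h')))
      (.inr ((hF'.f₀_lt_f₁ hε' hz).trans h'))
      (hF.f₀_lt_f₁ he hu) (hF'.f₀_lt_f₁ ((hsh.2.1 e).1 he) hu)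
  rw [inCompE, inCompE, hsh.f₁_lt_iff hε he]
  exact and_congr_right fun _ => and_congr_right fun h' => forall₂_congr (hreach h')

theorem compMin_eq (hsh : ShuffleEquiv G F F') (hG : G.IsTree) (hF : IsDMF G F)
    (hF' : IsDMF G F') {e : Sym2 V} (he : CritE G F e) {u : V} (hu : u ∈ e) {m m' : ℝ}
    (h : IsCompMin G F (F.f₁ e) u m) (h' : IsCompMin G F' (F'.f₁ e) u m') :
    ∃ z, CritV G F z ∧ F.f₀ z = m ∧ F'.f₀ z = m' := by
  obtain ⟨z, hz, hzc, rfl⟩ := h.exists_critV hF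
  obtain ⟨z', hz', hzc', rfl⟩ := h'.exists_critV hF'
  have hz'F := (hsh.1 z').2 hz'
  obtain rfl : z = z' := Set.InjOn.eq_of_isMinOn_of_le_iff
    (s := {x | CritV G F x ∧ inCompV G F (F.f₁ e) u x}) (fun x _ y _ => hF.2.1 x y)
    (fun x hx y hy => hsh.2.2.1 x y hx.1 hy.1) ⟨hz, hzc⟩
    ⟨hz'F, (hsh.inCompV_iff hG hF hF' he hu hz'F).2 hzc'⟩ (fun x hx => h.2 x hx.2)
    (fun x hx => h'.2 x ((hsh.inCompV_iff hG hF hF' he hu hx.1).1 hx.2))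
  exact ⟨z, hz, rfl, rfl⟩

theorem critValPair_of_isMaxCrit (hsh : ShuffleEquiv G F F') (hG : G.IsTree)
    (hF : IsDMF G F) (hF' : IsDMF G F') {e : Sym2 V} (he : CritE G F e) {u : V} (hu : u ∈ e)
    {m m' : ℝ} (h : IsMaxCrit G F (F.f₁ e) u m) (h' : IsMaxCrit G F' (F'.f₁ e) u m') :
    CritValPair G F F' m m' := by
  have hE := fun ε (hε : CritE G F ε) => hsh.inCompE_iff hG hF hF' he hu hε
  have hV := fun z (hz : CritV G F z) => hsh.inCompV_iff hG hF hF' he hu hz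
  by_cases hex : ∃ ε, CritE G F ε ∧ inCompE G F (F.f₁ e) u ε
  · have hex' : ∃ ε, CritE G F' ε ∧ inCompE G F' (F'.f₁ e) u ε :=
      hex.imp fun ε hε => ⟨(hsh.2.1 ε).1 hε.1, (hE ε hε.1).1 hε.2⟩
    obtain ⟨ε, hε, hεc, rfl⟩ := h.exists_critE hF hex
    obtain ⟨ε', hε', hεc', rfl⟩ := h'.exists_critE hF' hex'
    have hε'F := (hsh.2.1 ε').2 hε'
    obtain rfl : ε = ε' := Set.InjOn.eq_of_isMaxOn_of_le_iff
      (s := {x | CritE G F x ∧ inCompE G F (F.f₁ e) u x})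
      (fun x hx y hy => hF.2.2.1 x hx.1.1 y hy.1.1) (fun x hx y hy => hsh.2.2.2 x y hx.1 hy.1)
      ⟨hε, hεc⟩ ⟨hε'F, (hE ε' hε'F).2 hεc'⟩ (fun x hx => h.2.2 x hx.2 hx.1)
      (fun x hx => h'.2.2 x ((hE x hx.1).1 hx.2) ((hsh.2.1 x).1 hx.1))
    exact .inl ⟨ε, hε, rfl, rfl⟩
  · obtain ⟨z, hzc, hz, rfl⟩ :=
      h.1.resolve_right fun ⟨ε, hεc, hε, _⟩ => hex ⟨ε, hε, hεc⟩
    obtain ⟨z', hzc', hz', rfl⟩ := h'.1.resolve_right fun ⟨ε, hεc, hε, _⟩ =>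
      hex ⟨ε, (hsh.2.1 ε).2 hε, (hE ε ((hsh.2.1 ε).2 hε)).2 hεc⟩
    have hz'F := (hsh.1 z').2 hz'
    obtain rfl : z = z' := Set.InjOn.eq_of_isMaxOn_of_le_iff
      (s := {x | CritV G F x ∧ inCompV G F (F.f₁ e) u x}) (fun x _ y _ => hF.2.1 x y)
      (fun x hx y hy => hsh.2.2.1 x y hx.1 hy.1) ⟨hz, hzc⟩ ⟨hz'F, (hV z' hz'F).2 hzc'⟩
      (fun x hx => h.2.1 x hx.2 hx.1) (fun x hx => h'.2.1 x ((hV x hx.1).1 hx.2) ((hsh.1 x).1 hx.1))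
    exact .inr ⟨z, hz, rfl, rfl⟩

end ShuffleEquiv

section InducedMergeTree

variable {V : Type*} {G : SimpleGraph V} {F F' : PreDMF V} {T T' : MergeTree}
  {μ μ' : List Chir → ℝ}

theorem IsInducedMlTree.append_mem_iff (h : IsInducedMlTree G F T μ) {n : List Chir}
    (hn : n ∈ T.nodes) (x : Chir) :
    n ++ [x] ∈ T.nodes ↔ ∃ e, CritE G F e ∧ F.f₁ e = μ n := by
  have hx : n ++ [x] ∈ T.nodes ↔ n ++ [Chir.L] ∈ T.nodes := by
    cases x
    · rfl
    · exact (T.full n).symm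
  rw [hx]
  constructor
  · intro hL
    obtain ⟨e, he, hμ, -⟩ := h.2.2.2.2.2.2 n ⟨hn, hL⟩
    exact ⟨e, he, hμ⟩
  · rintro ⟨e, he, hμ⟩
    by_contra hL
    obtain ⟨v, -, hv⟩ := h.2.2.2.2.2.1 n ⟨hn, hL⟩
    exact he.2 v (hv.trans hμ.symm)

namespace ShuffleEquiv

theorem critValPair_root (hsh : ShuffleEquiv G F F') (hF : IsDMF G F)
    (h1 : IsInducedMlTree G F T μ) (h2 : IsInducedMlTree G F' T' μ')
    (hE : ∃ e, CritE G F e) : CritValPair G F F' (μ []) (μ' []) := by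
  obtain ⟨hroot, hmax⟩ := h1.2.2.2.1 hE
  obtain ⟨hroot', hmax'⟩ := h2.2.2.2.1 (hE.imp fun e => (hsh.2.1 e).1)
  obtain ⟨e, he, hμ, -⟩ := h1.2.2.2.2.2.2 [] hroot
  obtain ⟨e', he', hμ', -⟩ := h2.2.2.2.2.2.2 [] hroot'
  obtain rfl : e = e' := Set.InjOn.eq_of_isMaxOn_of_le_iff (s := {x | CritE G F x})
    (fun x hx y hy => hF.2.2.1 x hx.1 y hy.1) (fun x hx y hy => hsh.2.2.2 x y hx hy)
    he ((hsh.2.1 e').2 he') (fun x hx => hμ ▸ hmax x hx)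
    (fun x hx => hμ' ▸ hmax' x ((hsh.2.1 x).1 hx))
  exact .inl ⟨e, he, hμ, hμ'⟩

theorem critValPair_children (hsh : ShuffleEquiv G F F') (hG : G.IsTree) (hF : IsDMF G F)
    (hF' : IsDMF G F') {e : Sym2 V} (he : CritE G F e) {u w : V} (hu : u ∈ e) (hw : w ∈ e)
    {mu mw minu minw mu' mw' minu' minw' r₁ r₂ r₁' r₂' : ℝ}
    (hMu : IsMaxCrit G F (F.f₁ e) u mu) (hMw : IsMaxCrit G F (F.f₁ e) w mw)
    (hCu : IsCompMin G F (F.f₁ e) u minu) (hCw : IsCompMin G F (F.f₁ e) w minw)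
    (hMu' : IsMaxCrit G F' (F'.f₁ e) u mu') (hMw' : IsMaxCrit G F' (F'.f₁ e) w mw')
    (hCu' : IsCompMin G F' (F'.f₁ e) u minu') (hCw' : IsCompMin G F' (F'.f₁ e) w minw')
    (hd : (minu < minw ∧ r₁ = mu ∧ r₂ = mw) ∨ (minw < minu ∧ r₁ = mw ∧ r₂ = mu))
    (hd' : (minu' < minw' ∧ r₁' = mu' ∧ r₂' = mw') ∨
      (minw' < minu' ∧ r₁' = mw' ∧ r₂' = mu')) :
    CritValPair G F F' r₁ r₁' ∧ CritValPair G F F' r₂ r₂' := by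
  obtain ⟨zu, hzu, rfl, rfl⟩ := hsh.compMin_eq hG hF hF' he hu hCu hCu'
  obtain ⟨zw, hzw, rfl, rfl⟩ := hsh.compMin_eq hG hF hF' he hw hCw hCw'
  have hpu := hsh.critValPair_of_isMaxCrit hG hF hF' he hu hMu hMu'
  have hpw := hsh.critValPair_of_isMaxCrit hG hF hF' he hw hMw hMw'
  rcases hd with ⟨hlt, rfl, rfl⟩ | ⟨hlt, rfl, rfl⟩ <;>
    rcases hd' with ⟨hlt', rfl, rfl⟩ | ⟨hlt', rfl, rfl⟩
  · exact ⟨hpu, hpw⟩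
  · exact absurd ((hsh.f₀_lt_iff hzu hzw).1 hlt) (not_lt.2 hlt'.le)
  · exact absurd ((hsh.f₀_lt_iff hzw hzu).1 hlt) (not_lt.2 hlt'.le)
  · exact ⟨hpw, hpu⟩

theorem critValPair_append (hsh : ShuffleEquiv G F F') (hG : G.IsTree) (hF : IsDMF G F)
    (hF' : IsDMF G F') (h1 : IsInducedMlTree G F T μ) (h2 : IsInducedMlTree G F' T' μ')
    {n : List Chir} (hn : T.IsInner n) (hn' : T'.IsInner n) {e : Sym2 V} (he : CritE G F e)
    (hμ : F.f₁ e = μ n) (hμ' : F'.f₁ e = μ' n) (x : Chir) :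
    CritValPair G F F' (μ (n ++ [x])) (μ' (n ++ [x])) := by
  obtain ⟨e₁, he₁, hμ₁, u, w, rfl, mu, mw, minu, minw, hMu, hMw, hCu, hCw, hd⟩ :=
    h1.2.2.2.2.2.2 n hn
  obtain ⟨e₂, he₂, hμ₂, u', w', huw', mu', mw', minu', minw', hMu', hMw', hCu', hCw',
    hd'⟩ :=
    h2.2.2.2.2.2.2 n hn'
  obtain rfl : s(u, w) = e := hF.2.2.1 _ he₁.1 _ he.1 (hμ₁.trans hμ.symm)
  obtain rfl : e₂ = s(u, w) :=
    hF'.2.2.1 _ he₂.1 _ ((hsh.2.1 _).1 he).1 (hμ₂.trans hμ'.symm)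
  have hchildren : CritValPair G F F' (μ (n ++ [chir n])) (μ' (n ++ [chir n])) ∧
      CritValPair G F F' (μ (n ++ [(chir n).other])) (μ' (n ++ [(chir n).other])) := by
    have hu := Sym2.mem_mk_left u w
    have hw := Sym2.mem_mk_right u w
    rcases Sym2.eq_iff.1 huw' with ⟨rfl, rfl⟩ | ⟨rfl, rfl⟩
    · exact hsh.critValPair_children hG hF hF' he hu hw hMu hMw hCu hCw hMu' hMw' hCu' hCw'
        hd hd'
    · exact hsh.critValPair_children hG hF hF' he hu hw hMu hMw hCu hCw hMw' hMu' hCw' hCu'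
        hd hd'.symm
  obtain rfl | rfl : x = chir n ∨ x = (chir n).other := by
    generalize chir n = c
    cases x <;> cases c <;> simp [Chir.other]
  exacts [hchildren.1, hchildren.2]

theorem append_mem_iff_and_critValPair (hsh : ShuffleEquiv G F F') (hG : G.IsTree)
    (hF : IsDMF G F) (hF' : IsDMF G F') (h1 : IsInducedMlTree G F T μ)
    (h2 : IsInducedMlTree G F' T' μ') {n : List Chir} (hn : n ∈ T.nodes) (hn' : n ∈ T'.nodes)
    (hval : CritValPair G F F' (μ n) (μ' n)) (x : Chir) :
    (n ++ [x] ∈ T.nodes ↔ n ++ [x] ∈ T'.nodes) ∧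
      (n ++ [x] ∈ T.nodes → CritValPair G F F' (μ (n ++ [x])) (μ' (n ++ [x]))) := by
  rw [h1.append_mem_iff hn, h2.append_mem_iff hn']
  rcases hval with ⟨e, he, hμ, hμ'⟩ | ⟨z, -, hz, hz'⟩
  · have he' := (hsh.2.1 e).1 he
    refine ⟨iff_of_true ⟨e, he, hμ⟩ ⟨e, he', hμ'⟩, fun _ => ?_⟩
    exact hsh.critValPair_append hG hF hF' h1 h2
      ⟨hn, (h1.append_mem_iff hn _).2 ⟨e, he, hμ⟩⟩
      ⟨hn', (h2.append_mem_iff hn' _).2 ⟨e, he', hμ'⟩⟩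
      he hμ hμ' x
  · have hno : ¬ ∃ e, CritE G F e ∧ F.f₁ e = μ n :=
      fun ⟨e, he, h⟩ => he.2 z (hz.trans h.symm)
    have hno' : ¬ ∃ e, CritE G F' e ∧ F'.f₁ e = μ' n :=
      fun ⟨e, he, h⟩ => he.2 z (hz'.trans h.symm)
    exact ⟨iff_of_false hno hno', fun h => absurd h hno⟩

end ShuffleEquiv

end InducedMergeTree

theorem stmt13_general {V : Type*} (G : SimpleGraph V) (hG : G.IsTree)
    (F F' : PreDMF V) (hF : IsDMF G F) (hF' : IsDMF G F')
    (hsh : ShuffleEquiv G F F')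
    (T T' : MergeTree) (μ μ' : List Chir → ℝ)
    (h1 : IsInducedMlTree G F T μ) (h2 : IsInducedMlTree G F' T' μ') :
    T.nodes = T'.nodes := by
  by_cases hE : ∃ e, CritE G F e
  swap
  · have hE' : ¬ ∃ e, CritE G F' e := fun ⟨e, he⟩ => hE ⟨e, (hsh.2.1 e).2 he⟩
    rw [h1.2.2.2.2.1 hE, h2.2.2.2.2.1 hE']
  suffices key : ∀ n, (n ∈ T.nodes ↔ n ∈ T'.nodes) ∧
      (n ∈ T.nodes → CritValPair G F F' (μ n) (μ' n)) from
    Finset.ext fun n => (key n).1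
  intro n
  induction n using List.reverseRecOn with
  | nil => exact ⟨iff_of_true T.root_mem T'.root_mem, fun _ => hsh.critValPair_root hF h1 h2 hE⟩
  | append_singleton w x ih =>
    by_cases hw : w ∈ T.nodes
    · exact hsh.append_mem_iff_and_critValPair hG hF hF' h1 h2 hw (ih.1.1 hw) (ih.2 hw) x
    · have hnx : w ++ [x] ∉ T.nodes := mt (T.prefix_closed w x) hw
      have hnx' : w ++ [x] ∉ T'.nodes := mt (T'.prefix_closed w x) (mt ih.1.2 hw)
      exact ⟨iff_of_false hnx hnx', fun h => absurd h hnx⟩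

/-- Shuffle-equivalent dMfs on the same tree induce isomorphic merge trees (in the
path-word encoding, an isomorphism of merge trees is equality of the node sets). -/
theorem stmt13 {V : Type*} [Fintype V] (G : SimpleGraph V) (hG : G.IsTree)
    (F F' : PreDMF V) (hF : IsDMF G F) (hF' : IsDMF G F')
    (hsh : ShuffleEquiv G F F')
    (T T' : MergeTree) (μ μ' : List Chir → ℝ)
    (h1 : IsInducedMlTree G F T μ) (h2 : IsInducedMlTree G F' T' μ') :
    T.nodes = T'.nodes :=
  stmt13_general G hG F F' hF hF' hsh T T' μ μ' h1 h2
end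

section
/- Component-merge equivalent discrete Morse functions on trees induce isomorphic Morse labeled merge trees. -/
/-- Isomorphism of Morse labeled merge trees.  (In the path-word encoding a
chirality- and root-preserving bijection of merge trees is necessarily the identity on
path words, so it amounts to equality of the node sets together with a relabeling `ψ`
that is order-preserving on the labels and commutes with the labelings.) -/
def MlIso (T T' : MergeTree) (μ μ' : List Chir → ℝ) : Prop :=
  T.nodes = T'.nodes ∧ ∃ ψ : ℝ → ℝ, Function.Bijective ψ ∧
    (∀ a ∈ T.nodes, ∀ b ∈ T.nodes, μ a ≤ μ b → ψ (μ a) ≤ ψ (μ b)) ∧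
    (∀ n ∈ T.nodes, ψ (μ n) = μ' n)

/-- Component-merge (cm) equivalence between dMfs on trees: a value-preserving
bijection of simplices (vertices to vertices, edges to edges) that induces a bijection
between the connected components of every sublevel complex, and such that an edge of
critical value `a` merges two given components of the strict sublevel complex
`X_{a-ε}` if and only if its image merges the corresponding components. -/
def CmEquiv {V V' : Type*} (G : SimpleGraph V) (F : PreDMF V)
    (G' : SimpleGraph V') (F' : PreDMF V')
    (φv : V → V') (φe : Sym2 V → Sym2 V') : Prop :=
  Function.Bijective φv ∧
  (∀ e ∈ G.edgeSet, φe e ∈ G'.edgeSet) ∧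
  (∀ e₁ ∈ G.edgeSet, ∀ e₂ ∈ G.edgeSet, φe e₁ = φe e₂ → e₁ = e₂) ∧
  (∀ e' ∈ G'.edgeSet, ∃ e ∈ G.edgeSet, φe e = e') ∧
  (∀ v : V, F'.f₀ (φv v) = F.f₀ v) ∧
  (∀ e ∈ G.edgeSet, F'.f₁ (φe e) = F.f₁ e) ∧
  (∀ (c : ℝ) (u w : V),
    (lsub G F c).Reachable u w ↔ (lsub G' F' c).Reachable (φv u) (φv w)) ∧
  (∀ e ∈ G.edgeSet, ∀ u ∈ e, ∃ u' ∈ φe e, (ssub G' F' (F.f₁ e)).Reachable (φv u) u') ∧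
  (∀ e ∈ G.edgeSet, ∀ u' ∈ φe e, ∃ u ∈ e, (ssub G' F' (F.f₁ e)).Reachable u' (φv u))


/-!
The isomorphism is the identity on path words and on labels. A cm equivalence preserves
values, critical simplices, and the components of every strict sublevel complex together
with their minima and maximal critical values. The induced Ml tree is read off exactly these
data: the root carries the largest critical edge value (or the only critical value), and the
children of an inner node carrying the critical edge `e` carry the maximal critical values of
the two components merged by `e`, ordered by their minima. Since `X` is a tree, the endpoints
of `e` lie in different components of `X_{f(e)-ε}`, so the endpoints of `φ(e)` are matched
with them, and induction on path words shows that both trees have the same nodes and labels.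
-/

theorem Chir.eq_or_eq_other (x y : Chir) : x = y ∨ x = y.other := by
  cases x <;> cases y <;> simp [Chir.other]

theorem MergeTree.append_singleton_mem_iff (T : MergeTree) (n : List Chir) (x : Chir) :
    n ++ [x] ∈ T.nodes ↔ T.IsInner n := by
  refine ⟨fun h => ⟨T.prefix_closed n x h, ?_⟩, fun h => ?_⟩ <;> cases x
  exacts [h, (T.full n).2 h, h.2, (T.full n).1 h.2]

section Sublevel

variable {V : Type*} (G : SimpleGraph V) (F : PreDMF V)

theorem lsub_mono {c₁ c₂ : ℝ} (h : c₁ ≤ c₂) : lsub G F c₁ ≤ lsub G F c₂ :=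
  fun _ _ hab => ⟨hab.1, hab.2.trans h⟩

theorem ssub_mono {c₁ c₂ : ℝ} (h : c₁ ≤ c₂) : ssub G F c₁ ≤ ssub G F c₂ :=
  fun _ _ hab => ⟨hab.1, hab.2.trans_le h⟩

theorem lsub_le_ssub {c₁ c₂ : ℝ} (h : c₁ < c₂) : lsub G F c₁ ≤ ssub G F c₂ :=
  fun _ _ hab => ⟨hab.1, hab.2.trans_lt h⟩

variable {G F}

/-- A path uses finitely many edges, so it stays below some level `c' < c`. -/
theorem ssub_reachable_iff_exists_lsub (c : ℝ) {u w : V} :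
    (ssub G F c).Reachable u w ↔ ∃ c' < c, (lsub G F c').Reachable u w := by
  constructor
  · rintro ⟨p⟩
    induction p with
    | nil => exact ⟨c - 1, by linarith, .refl _⟩
    | cons hadj _ ih =>
      obtain ⟨c', hc', hr⟩ := ih
      refine ⟨max (F.f₁ s(_, _)) c', max_lt hadj.2 hc', ?_⟩
      exact (SimpleGraph.Adj.reachable (G := lsub G F _) ⟨hadj.1, le_max_left _ _⟩).trans
        (hr.mono (lsub_mono G F (le_max_right _ _)))
  · rintro ⟨c', hc', hr⟩
    exact hr.mono (lsub_le_ssub G F hc')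

theorem not_reachable_ssub_of_adj (hG : G.IsAcyclic) {u w : V} (hadj : G.Adj u w) :
    ¬ (ssub G F (F.f₁ s(u, w))).Reachable u w := by
  have hbridge := SimpleGraph.isAcyclic_iff_forall_adj_isBridge.1 hG hadj
  refine SimpleGraph.isBridge_iff.1 hbridge ∘ fun hr => hr.mono fun a b hab => ?_
  refine SimpleGraph.deleteEdges_adj.2 ⟨hab.1, fun hmem => ?_⟩
  have hlt : F.f₁ s(a, b) < F.f₁ s(u, w) := hab.2
  rw [Set.mem_singleton_iff.1 hmem] at hlt
  exact lt_irrefl _ hlt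

theorem inCompV_congr {c : ℝ} {u₁ u₂ : V} (hr : (ssub G F c).Reachable u₁ u₂) :
    inCompV G F c u₁ = inCompV G F c u₂ :=
  funext fun _ => propext <| and_congr_right fun _ => ⟨(·.trans hr), (·.trans hr.symm)⟩

theorem inCompE_congr {c : ℝ} {u₁ u₂ : V} (hr : (ssub G F c).Reachable u₁ u₂) :
    inCompE G F c u₁ = inCompE G F c u₂ :=
  funext fun _ => propext <| and_congr_right fun _ => and_congr_right fun _ =>
    forall₂_congr fun _ _ => ⟨(·.trans hr), (·.trans hr.symm)⟩

theorem isMaxCrit_congr {c m : ℝ} {u₁ u₂ : V} (hr : (ssub G F c).Reachable u₁ u₂) :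
    IsMaxCrit G F c u₁ m ↔ IsMaxCrit G F c u₂ m := by
  simp only [IsMaxCrit, inCompV_congr hr, inCompE_congr hr]

theorem isCompMin_congr {c m : ℝ} {u₁ u₂ : V} (hr : (ssub G F c).Reachable u₁ u₂) :
    IsCompMin G F c u₁ m ↔ IsCompMin G F c u₂ m := by
  simp only [IsCompMin, inCompV_congr hr]

theorem IsMaxCrit.unique {c : ℝ} {u : V} {m₁ m₂ : ℝ} (h₁ : IsMaxCrit G F c u m₁)
    (h₂ : IsMaxCrit G F c u m₂) : m₁ = m₂ := by
  have le_of_isMaxCrit : ∀ {a b : ℝ}, IsMaxCrit G F c u a → IsMaxCrit G F c u b → a ≤ b := by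
    rintro a b ⟨⟨z, hz, hcz, rfl⟩ | ⟨e, he, hce, rfl⟩, -⟩ hb
    exacts [hb.2.1 z hz hcz, hb.2.2 e he hce]
  exact le_antisymm (le_of_isMaxCrit h₁ h₂) (le_of_isMaxCrit h₂ h₁)

theorem IsCompMin.unique {c : ℝ} {u : V} {m₁ m₂ : ℝ} (h₁ : IsCompMin G F c u m₁)
    (h₂ : IsCompMin G F c u m₂) : m₁ = m₂ := by
  obtain ⟨⟨z₁, hz₁, rfl⟩, hle₁⟩ := h₁
  obtain ⟨⟨z₂, hz₂, rfl⟩, hle₂⟩ := h₂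
  exact le_antisymm (hle₁ z₂ hz₂) (hle₂ z₁ hz₁)

end Sublevel

namespace CmEquiv

variable {V V' : Type*} {G : SimpleGraph V} {F : PreDMF V} {G' : SimpleGraph V'}
  {F' : PreDMF V'} {φv : V → V'} {φe : Sym2 V → Sym2 V'}

theorem bijective (hcm : CmEquiv G F G' F' φv φe) : Function.Bijective φv := hcm.1

theorem mem_edgeSet (hcm : CmEquiv G F G' F' φv φe) {e : Sym2 V} (he : e ∈ G.edgeSet) :
    φe e ∈ G'.edgeSet :=
  hcm.2.1 e he

theorem exists_eq_of_mem_edgeSet (hcm : CmEquiv G F G' F' φv φe) {e' : Sym2 V'}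
    (he' : e' ∈ G'.edgeSet) : ∃ e ∈ G.edgeSet, φe e = e' :=
  hcm.2.2.2.1 e' he'

theorem f₀_apply (hcm : CmEquiv G F G' F' φv φe) (v : V) : F'.f₀ (φv v) = F.f₀ v :=
  hcm.2.2.2.2.1 v

theorem f₁_apply (hcm : CmEquiv G F G' F' φv φe) {e : Sym2 V} (he : e ∈ G.edgeSet) :
    F'.f₁ (φe e) = F.f₁ e :=
  hcm.2.2.2.2.2.1 e he

theorem lsub_reachable_iff (hcm : CmEquiv G F G' F' φv φe) (c : ℝ) (u w : V) :
    (lsub G F c).Reachable u w ↔ (lsub G' F' c).Reachable (φv u) (φv w) :=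
  hcm.2.2.2.2.2.2.1 c u w

theorem exists_mem_map_reachable (hcm : CmEquiv G F G' F' φv φe) {e : Sym2 V}
    (he : e ∈ G.edgeSet) {u : V} (hu : u ∈ e) :
    ∃ u' ∈ φe e, (ssub G' F' (F.f₁ e)).Reachable (φv u) u' :=
  hcm.2.2.2.2.2.2.2.1 e he u hu

theorem exists_mem_reachable_map (hcm : CmEquiv G F G' F' φv φe) {e : Sym2 V}
    (he : e ∈ G.edgeSet) {u' : V'} (hu' : u' ∈ φe e) :
    ∃ u ∈ e, (ssub G' F' (F.f₁ e)).Reachable u' (φv u) :=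
  hcm.2.2.2.2.2.2.2.2 e he u' hu'

theorem ssub_reachable_iff (hcm : CmEquiv G F G' F' φv φe) (c : ℝ) (u w : V) :
    (ssub G F c).Reachable u w ↔ (ssub G' F' c).Reachable (φv u) (φv w) := by
  simp only [ssub_reachable_iff_exists_lsub, hcm.lsub_reachable_iff]

theorem critV_iff (hcm : CmEquiv G F G' F' φv φe) (v : V) :
    CritV G F v ↔ CritV G' F' (φv v) := by
  refine ⟨fun h e' he' => ?_, fun h e he => ?_⟩
  · obtain ⟨e, he, rfl⟩ := hcm.exists_eq_of_mem_edgeSet he'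
    rw [hcm.f₁_apply he, hcm.f₀_apply]
    exact h e he
  · simpa only [hcm.f₁_apply he, hcm.f₀_apply] using h (φe e) (hcm.mem_edgeSet he)

theorem critE_iff (hcm : CmEquiv G F G' F' φv φe) {e : Sym2 V} (he : e ∈ G.edgeSet) :
    CritE G F e ↔ CritE G' F' (φe e) := by
  simp only [CritE, he, hcm.mem_edgeSet he, true_and, hcm.f₁_apply he,
    hcm.bijective.surjective.forall, hcm.f₀_apply]

theorem image_critV (hcm : CmEquiv G F G' F' φv φe) :
    F'.f₀ '' {v' | CritV G' F' v'} = F.f₀ '' {v | CritV G F v} := by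
  ext x
  constructor
  · rintro ⟨v', hv', rfl⟩
    obtain ⟨v, rfl⟩ := hcm.bijective.2 v'
    exact ⟨v, (hcm.critV_iff v).2 hv', (hcm.f₀_apply v).symm⟩
  · rintro ⟨v, hv, rfl⟩
    exact ⟨φv v, (hcm.critV_iff v).1 hv, hcm.f₀_apply v⟩

theorem image_critE (hcm : CmEquiv G F G' F' φv φe) :
    F'.f₁ '' {e' | CritE G' F' e'} = F.f₁ '' {e | CritE G F e} := by
  ext x
  constructor
  · rintro ⟨e', he', rfl⟩
    obtain ⟨e, he, rfl⟩ := hcm.exists_eq_of_mem_edgeSet he'.1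
    exact ⟨e, (hcm.critE_iff he).2 he', (hcm.f₁_apply he).symm⟩
  · rintro ⟨e, he, rfl⟩
    exact ⟨φe e, (hcm.critE_iff he.1).1 he, hcm.f₁_apply he.1⟩

theorem exists_critE_iff (hcm : CmEquiv G F G' F' φv φe) :
    (∃ e, CritE G F e) ↔ ∃ e', CritE G' F' e' := by
  refine ⟨fun ⟨e, he⟩ => ⟨φe e, (hcm.critE_iff he.1).1 he⟩, fun ⟨e', he'⟩ => ?_⟩
  obtain ⟨e, he, rfl⟩ := hcm.exists_eq_of_mem_edgeSet he'.1
  exact ⟨e, (hcm.critE_iff he).2 he'⟩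

theorem inCompV_iff (hcm : CmEquiv G F G' F' φv φe) (c : ℝ) (u z : V) :
    inCompV G F c u z ↔ inCompV G' F' c (φv u) (φv z) := by
  rw [inCompV, inCompV, hcm.f₀_apply, hcm.ssub_reachable_iff]

theorem inCompE_iff (hcm : CmEquiv G F G' F' φv φe) {c : ℝ} {u : V} {e : Sym2 V}
    (he : e ∈ G.edgeSet) : inCompE G F c u e ↔ inCompE G' F' c (φv u) (φe e) := by
  simp only [inCompE, he, hcm.mem_edgeSet he, hcm.f₁_apply he, true_and]
  refine and_congr_right fun hlt => ⟨fun hall z' hz' => ?_, fun hall z hz => ?_⟩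
  · obtain ⟨z, hz, hr⟩ := hcm.exists_mem_reachable_map he hz'
    exact (hr.mono (ssub_mono G' F' hlt.le)).trans ((hcm.ssub_reachable_iff c z u).1 (hall z hz))
  · obtain ⟨z', hz', hr⟩ := hcm.exists_mem_map_reachable he hz
    exact (hcm.ssub_reachable_iff c z u).2 ((hr.mono (ssub_mono G' F' hlt.le)).trans (hall z' hz'))

theorem isMaxCrit_map (hcm : CmEquiv G F G' F' φv φe) {c m : ℝ} {u : V}
    (h : IsMaxCrit G F c u m) : IsMaxCrit G' F' c (φv u) m := by
  obtain ⟨hw, hle_critV, hle_critE⟩ := h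
  refine ⟨?_, fun z' hz' hcz' => ?_, fun e' he' hce' => ?_⟩
  · rcases hw with ⟨z, hz, hcz, rfl⟩ | ⟨e, he, hce, rfl⟩
    · exact .inl ⟨φv z, (hcm.inCompV_iff c u z).1 hz, (hcm.critV_iff z).1 hcz, hcm.f₀_apply z⟩
    · exact .inr ⟨φe e, (hcm.inCompE_iff he.1).1 he, (hcm.critE_iff he.1).1 hce,
        hcm.f₁_apply he.1⟩
  · obtain ⟨z, rfl⟩ := hcm.bijective.2 z'
    rw [hcm.f₀_apply]
    exact hle_critV z ((hcm.inCompV_iff c u z).2 hz') ((hcm.critV_iff z).2 hcz')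
  · obtain ⟨e, he, rfl⟩ := hcm.exists_eq_of_mem_edgeSet he'.1
    rw [hcm.f₁_apply he]
    exact hle_critE e ((hcm.inCompE_iff he).2 he') ((hcm.critE_iff he).2 hce')

theorem isCompMin_map (hcm : CmEquiv G F G' F' φv φe) {c m : ℝ} {u : V}
    (h : IsCompMin G F c u m) : IsCompMin G' F' c (φv u) m := by
  obtain ⟨⟨z, hz, rfl⟩, hle⟩ := h
  refine ⟨⟨φv z, (hcm.inCompV_iff c u z).1 hz, hcm.f₀_apply z⟩, fun z' hz' => ?_⟩
  obtain ⟨z', rfl⟩ := hcm.bijective.2 z'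
  rw [hcm.f₀_apply]
  exact hle z' ((hcm.inCompV_iff c u z').2 hz')

theorem reachable_endpoints (hG : G.IsAcyclic) (hcm : CmEquiv G F G' F' φv φe) {u w : V}
    (hadj : G.Adj u w) {u' w' : V'} (huw' : φe s(u, w) = s(u', w')) :
    ((ssub G' F' (F.f₁ s(u, w))).Reachable (φv u) u' ∧
        (ssub G' F' (F.f₁ s(u, w))).Reachable (φv w) w') ∨
      ((ssub G' F' (F.f₁ s(u, w))).Reachable (φv u) w' ∧
        (ssub G' F' (F.f₁ s(u, w))).Reachable (φv w) u') := by
  have he : s(u, w) ∈ G.edgeSet := hadj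
  obtain ⟨a', ha', hua'⟩ := hcm.exists_mem_map_reachable he (Sym2.mem_mk_left u w)
  obtain ⟨b', hb', hwb'⟩ := hcm.exists_mem_map_reachable he (Sym2.mem_mk_right u w)
  have hsep : a' ≠ b' := by
    rintro rfl
    exact not_reachable_ssub_of_adj hG hadj ((hcm.ssub_reachable_iff _ u w).2 (hua'.trans hwb'.symm))
  rw [huw', Sym2.mem_iff] at ha' hb'
  rcases ha' with rfl | rfl <;> rcases hb' with rfl | rfl
  exacts [absurd rfl hsep, .inl ⟨hua', hwb'⟩, .inr ⟨hua', hwb'⟩, absurd rfl hsep]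

end CmEquiv

/-- The chirality rule of `IsInducedMlTree` for the children of the inner node `n`: `mu`, `mw`
are the maximal critical values and `minu`, `minw` the minima of the two merged components. -/
def IsChildLabeling (ν : List Chir → ℝ) (n : List Chir) (mu mw minu minw : ℝ) : Prop :=
  (minu < minw ∧ ν (n ++ [chir n]) = mu ∧ ν (n ++ [(chir n).other]) = mw) ∨
    (minw < minu ∧ ν (n ++ [chir n]) = mw ∧ ν (n ++ [(chir n).other]) = mu)

theorem IsChildLabeling.swap {ν : List Chir → ℝ} {n : List Chir} {mu mw minu minw : ℝ}
    (h : IsChildLabeling ν n mu mw minu minw) : IsChildLabeling ν n mw mu minw minu :=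
  h.symm

theorem IsChildLabeling.label_eq {ν ν' : List Chir → ℝ} {n : List Chir} {mu mw minu minw : ℝ}
    (h : IsChildLabeling ν n mu mw minu minw) (h' : IsChildLabeling ν' n mu mw minu minw)
    (x : Chir) : ν (n ++ [x]) = ν' (n ++ [x]) := by
  rcases h with ⟨hlt, hA, hB⟩ | ⟨hlt, hA, hB⟩ <;>
    rcases h' with ⟨hlt', hA', hB'⟩ | ⟨hlt', hA', hB'⟩
  all_goals first
    | exact absurd hlt hlt'.not_gt
    | rcases x.eq_or_eq_other (chir n) with rfl | rfl
      exacts [hA.trans hA'.symm, hB.trans hB'.symm]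

namespace IsInducedMlTree

variable {V : Type*} {G : SimpleGraph V} {F : PreDMF V} {T : MergeTree} {μ : List Chir → ℝ}

theorem isInner_iff (h : IsInducedMlTree G F T μ) {n : List Chir} (hn : n ∈ T.nodes) :
    T.IsInner n ↔ μ n ∈ F.f₁ '' {e | CritE G F e} := by
  refine ⟨fun hI => ?_, fun ⟨e, he, hev⟩ => ?_⟩
  · obtain ⟨e, he, hev, -⟩ := h.2.2.2.2.2.2 n hI
    exact ⟨e, he, hev⟩
  · by_contra hI
    obtain ⟨v, -, hv⟩ := h.2.2.2.2.2.1 n ⟨hn, fun hc => hI ⟨hn, hc⟩⟩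
    exact he.2 v (hv.trans hev.symm)

theorem isGreatest_label_nil (h : IsInducedMlTree G F T μ) (hE : ∃ e, CritE G F e) :
    IsGreatest (F.f₁ '' {e | CritE G F e}) (μ []) := by
  obtain ⟨hroot, hle⟩ := h.2.2.2.1 hE
  refine ⟨(h.isInner_iff T.root_mem).1 hroot, ?_⟩
  rintro _ ⟨e, he, rfl⟩
  exact hle e he

theorem image_critV_eq_singleton (h : IsInducedMlTree G F T μ) (hE : ¬ ∃ e, CritE G F e) :
    F.f₀ '' {v | CritV G F v} = {μ []} := by
  have hnodes := h.2.2.2.2.1 hE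
  ext x
  constructor
  · rintro ⟨v, hv, rfl⟩
    obtain ⟨n, hn, hnv⟩ := h.2.2.1 v hv
    obtain rfl : n = [] := by simpa [hnodes] using hn.1
    exact hnv.symm
  · rintro rfl
    obtain ⟨v, hv, hvμ⟩ := h.2.2.2.2.2.1 [] ⟨T.root_mem, by simp [hnodes]⟩
    exact ⟨v, hv, hvμ⟩

end IsInducedMlTree

section InducedMlTrees

variable {V V' : Type*} {G : SimpleGraph V} {F : PreDMF V} {G' : SimpleGraph V'}
  {F' : PreDMF V'} {φv : V → V'} {φe : Sym2 V → Sym2 V'} {T T' : MergeTree}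
  {μ μ' : List Chir → ℝ}

theorem label_nil_eq (hcm : CmEquiv G F G' F' φv φe) (h₁ : IsInducedMlTree G F T μ)
    (h₂ : IsInducedMlTree G' F' T' μ') : μ [] = μ' [] := by
  by_cases hE : ∃ e, CritE G F e
  · refine (h₁.isGreatest_label_nil hE).unique ?_
    simpa only [hcm.image_critE] using h₂.isGreatest_label_nil (hcm.exists_critE_iff.1 hE)
  · refine Set.singleton_injective ((h₁.image_critV_eq_singleton hE).symm.trans ?_)
    rw [← hcm.image_critV]
    exact h₂.image_critV_eq_singleton (hcm.exists_critE_iff.not.1 hE)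

theorem isInner_iff_of_label_eq (hcm : CmEquiv G F G' F' φv φe)
    (h₁ : IsInducedMlTree G F T μ) (h₂ : IsInducedMlTree G' F' T' μ') {n : List Chir}
    (hn : n ∈ T.nodes) (hn' : n ∈ T'.nodes) (hμ : μ n = μ' n) :
    T.IsInner n ↔ T'.IsInner n := by
  rw [h₁.isInner_iff hn, h₂.isInner_iff hn', hμ, hcm.image_critE]

theorem label_append_eq (hG : G.IsAcyclic) (hF' : IsDMF G' F') (hcm : CmEquiv G F G' F' φv φe)
    (h₁ : IsInducedMlTree G F T μ) (h₂ : IsInducedMlTree G' F' T' μ') {n : List Chir}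
    (hn : T.IsInner n) (hn' : T'.IsInner n) (hμ : μ n = μ' n) (x : Chir) :
    μ (n ++ [x]) = μ' (n ++ [x]) := by
  obtain ⟨e, he, hev, u, w, rfl, mu, mw, minu, minw, hmu, hmw, hminu, hminw, hlabel⟩ :=
    h₁.2.2.2.2.2.2 n hn
  obtain ⟨e', he', hev', u', w', huw', mu', mw', minu', minw', hmu', hmw', hminu', hminw',
    hlabel'⟩ := h₂.2.2.2.2.2.2 n hn'
  obtain rfl : e' = φe s(u, w) := hF'.2.2.1 e' he'.1 _ (hcm.mem_edgeSet he.1)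
    (by rw [hev', ← hμ, ← hev, hcm.f₁_apply he.1])
  rw [hcm.f₁_apply he.1] at hmu' hmw' hminu' hminw'
  rcases hcm.reachable_endpoints hG he.1 huw'.symm with ⟨hu, hw⟩ | ⟨hu, hw⟩
  · obtain rfl := ((isMaxCrit_congr hu).1 (hcm.isMaxCrit_map hmu)).unique hmu'
    obtain rfl := ((isMaxCrit_congr hw).1 (hcm.isMaxCrit_map hmw)).unique hmw'
    obtain rfl := ((isCompMin_congr hu).1 (hcm.isCompMin_map hminu)).unique hminu'
    obtain rfl := ((isCompMin_congr hw).1 (hcm.isCompMin_map hminw)).unique hminw'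
    exact IsChildLabeling.label_eq hlabel hlabel' x
  · obtain rfl := ((isMaxCrit_congr hu).1 (hcm.isMaxCrit_map hmu)).unique hmw'
    obtain rfl := ((isMaxCrit_congr hw).1 (hcm.isMaxCrit_map hmw)).unique hmu'
    obtain rfl := ((isCompMin_congr hu).1 (hcm.isCompMin_map hminu)).unique hminw'
    obtain rfl := ((isCompMin_congr hw).1 (hcm.isCompMin_map hminw)).unique hminu'
    exact IsChildLabeling.label_eq hlabel (IsChildLabeling.swap hlabel') x

theorem mem_nodes_iff_and_label_eq (hG : G.IsAcyclic) (hF' : IsDMF G' F')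
    (hcm : CmEquiv G F G' F' φv φe) (h₁ : IsInducedMlTree G F T μ)
    (h₂ : IsInducedMlTree G' F' T' μ') (n : List Chir) :
    (n ∈ T.nodes ↔ n ∈ T'.nodes) ∧ (n ∈ T.nodes → μ n = μ' n) := by
  induction n using List.reverseRecOn with
  | nil => exact ⟨iff_of_true T.root_mem T'.root_mem, fun _ => label_nil_eq hcm h₁ h₂⟩
  | append_singleton n x ih =>
    rw [T.append_singleton_mem_iff, T'.append_singleton_mem_iff]
    by_cases hn : n ∈ T.nodes
    · have hμ := ih.2 hn
      have hinner := isInner_iff_of_label_eq hcm h₁ h₂ hn (ih.1.1 hn) hμ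
      exact ⟨hinner, fun hI => label_append_eq hG hF' hcm h₁ h₂ hI (hinner.1 hI) hμ x⟩
    · exact ⟨iff_of_false (hn ·.1) (hn <| ih.1.2 ·.1), fun hI => absurd hI.1 hn⟩

end InducedMlTrees

theorem stmt15_general {V V' : Type*}
    (G : SimpleGraph V) (G' : SimpleGraph V') (hG : G.IsTree)
    (F : PreDMF V) (F' : PreDMF V') (hF' : IsDMF G' F')
    (φv : V → V') (φe : Sym2 V → Sym2 V') (hcm : CmEquiv G F G' F' φv φe)
    (T T' : MergeTree) (μ μ' : List Chir → ℝ)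
    (h1 : IsInducedMlTree G F T μ) (h2 : IsInducedMlTree G' F' T' μ') :
    MlIso T T' μ μ' := by
  have hagree := mem_nodes_iff_and_label_eq hG.isAcyclic hF' hcm h1 h2
  exact ⟨Finset.ext fun n => (hagree n).1, id, Function.bijective_id,
    fun _ _ _ _ h => h, fun n hn => (hagree n).2 hn⟩

/-- Component-merge equivalent dMfs on trees induce isomorphic Morse labeled merge
trees. -/
theorem stmt15 {V V' : Type*} [Fintype V] [Fintype V']
    (G : SimpleGraph V) (G' : SimpleGraph V') (hG : G.IsTree) (hG' : G'.IsTree)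
    (F : PreDMF V) (F' : PreDMF V') (hF : IsDMF G F) (hF' : IsDMF G' F')
    (φv : V → V') (φe : Sym2 V → Sym2 V') (hcm : CmEquiv G F G' F' φv φe)
    (T T' : MergeTree) (μ μ' : List Chir → ℝ)
    (h1 : IsInducedMlTree G F T μ) (h2 : IsInducedMlTree G' F' T' μ') :
    MlIso T T' μ μ' :=
  stmt15_general G G' hG F F' hF' φv φe hcm T T' μ μ' h1 h2
end
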